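/- For the destructive-pairs q-measure μ(A) = ν(A) - 2ν({x ∈ A : x + 3/4 ∈ A}) on [0,1], b ∈ [3/4,1], and n ≥ 1, ∫_0^b xⁿ dμ = (1/(n+1))·(b^(n+1) - 2(b - 3/4)^(n+1)). -/
import Mathlib


open MeasureTheory Set

/-- The destructive-pairs q-measure on `[0,1]`:
`μ(A) = ν(A) - 2 ν({x ∈ A : x + 3/4 ∈ A})` with `ν` Lebesgue measure. -/
noncomputable def destrMeas (A : Set ℝ) : ℝ :=
  (volume A).toReal - 2 * (volume {x | x ∈ A ∧ x + 3 / 4 ∈ A}).toReal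

-- continuity of the auxiliary function
lemma aux_cont (n : ℕ) (a : ℝ) :
    Continuous (fun lam : ℝ => max (a - lam ^ ((n : ℝ)⁻¹)) 0) := by
  apply Continuous.max _ continuous_const
  apply Continuous.sub continuous_const
  exact continuous_iff_continuousAt.2 fun x =>
    Real.continuousAt_rpow_const x _ (Or.inr (by positivity))

lemma aux_zero (n : ℕ) (hn : 1 ≤ n) (a : ℝ) (ha : 0 ≤ a) {lam : ℝ}
    (hlam : a ^ n ≤ lam) : max (a - lam ^ ((n : ℝ)⁻¹)) 0 = 0 := by
  have h0 : (0:ℝ) ≤ (n:ℝ)⁻¹ := by positivity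
  have h1 : (a ^ n : ℝ) ^ ((n : ℝ)⁻¹) ≤ lam ^ ((n : ℝ)⁻¹) :=
    Real.rpow_le_rpow (by positivity) hlam h0
  have h2 : (a ^ n : ℝ) ^ ((n : ℝ)⁻¹) = a := by
    rw [← Real.rpow_natCast a n, ← Real.rpow_mul ha]
    rw [mul_inv_cancel₀ (by exact_mod_cast Nat.one_le_iff_ne_zero.1 hn), Real.rpow_one]
  rw [max_eq_right]
  nlinarith [h1, h2]

-- the key integral
lemma aux_integral (n : ℕ) (hn : 1 ≤ n) (a : ℝ) (ha : 0 ≤ a) (ha1 : a ≤ 1) :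
    (∫ lam in Set.Ioi (0 : ℝ), max (a - lam ^ ((n : ℝ)⁻¹)) 0)
      = a ^ (n + 1) / ((n : ℝ) + 1) := by
  have hnR : (0:ℝ) < n := by exact_mod_cast hn
  set f : ℝ → ℝ := fun lam => max (a - lam ^ ((n : ℝ)⁻¹)) 0 with hf
  have hA : (0:ℝ) ≤ a ^ n := by positivity
  have hint1 : IntegrableOn f (Ioc 0 (a ^ n)) volume :=
    (aux_cont n a).integrableOn_Ioc
  have hint2 : IntegrableOn f (Ioi (a ^ n)) volume := by
    refine (integrableOn_congr_fun (g := fun _ => (0:ℝ)) ?_ measurableSet_Ioi).2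
      (integrableOn_zero)
    intro x hx
    exact aux_zero n hn a ha (le_of_lt hx)
  have hsplit : (∫ lam in Set.Ioi (0 : ℝ), f lam)
      = (∫ lam in Ioc 0 (a ^ n), f lam) + ∫ lam in Ioi (a ^ n), f lam := by
    rw [← setIntegral_union (Ioc_disjoint_Ioi le_rfl) measurableSet_Ioi hint1 hint2,
      Ioc_union_Ioi_eq_Ioi hA]
  have hz : (∫ lam in Ioi (a ^ n), f lam) = 0 := by
    rw [setIntegral_congr_fun measurableSet_Ioi
      (fun x hx => aux_zero n hn a ha (le_of_lt hx))]
    simp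
  have heq : (∫ lam in Ioc 0 (a ^ n), f lam)
      = ∫ lam in Ioc 0 (a ^ n), (a - lam ^ ((n : ℝ)⁻¹)) := by
    refine setIntegral_congr_fun measurableSet_Ioc ?_
    intro x hx
    have h0 : (0:ℝ) ≤ (n:ℝ)⁻¹ := by positivity
    have h1 : x ^ ((n : ℝ)⁻¹) ≤ (a ^ n : ℝ) ^ ((n : ℝ)⁻¹) :=
      Real.rpow_le_rpow (le_of_lt hx.1) hx.2 h0
    have h2 : (a ^ n : ℝ) ^ ((n : ℝ)⁻¹) = a := by
      rw [← Real.rpow_natCast a n, ← Real.rpow_mul ha]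
      rw [mul_inv_cancel₀ hnR.ne', Real.rpow_one]
    simp only [hf]
    rw [max_eq_left]
    nlinarith [h1, h2]
  have hiv : (∫ lam in Ioc 0 (a ^ n), (a - lam ^ ((n : ℝ)⁻¹)))
      = ∫ lam in (0:ℝ)..(a ^ n), (a - lam ^ ((n : ℝ)⁻¹)) := by
    rw [intervalIntegral.integral_of_le hA]
  have hrpow : (∫ lam in (0:ℝ)..(a ^ n), lam ^ ((n : ℝ)⁻¹))
      = ((a ^ n : ℝ) ^ ((n:ℝ)⁻¹ + 1) - (0:ℝ) ^ ((n:ℝ)⁻¹ + 1)) / ((n:ℝ)⁻¹ + 1) :=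
    integral_rpow (Or.inl (by have := inv_nonneg.2 hnR.le; linarith))
  have hApow : (a ^ n : ℝ) ^ ((n:ℝ)⁻¹ + 1) = a ^ (n + 1) := by
    rw [← Real.rpow_natCast a n, ← Real.rpow_mul ha]
    rw [show (n:ℝ) * ((n:ℝ)⁻¹ + 1) = ((n:ℕ) + 1 : ℕ) by
      push_cast; field_simp; ring]
    rw [Real.rpow_natCast]
  have hconst : IntervalIntegrable (fun _ : ℝ => a) volume 0 (a ^ n) :=
    intervalIntegrable_const
  have hrpint : IntervalIntegrable (fun lam : ℝ => lam ^ ((n : ℝ)⁻¹)) volume 0 (a ^ n) :=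
    (intervalIntegral.intervalIntegrable_rpow (Or.inl (by positivity)))
  rw [hsplit, hz, add_zero, heq, hiv, intervalIntegral.integral_sub hconst hrpint,
    hrpow, hApow, intervalIntegral.integral_const]
  have h0p : (0:ℝ) ^ ((n:ℝ)⁻¹ + 1) = 0 := by
    rw [Real.zero_rpow (by positivity)]
  rw [h0p]
  have hne : (n:ℝ)⁻¹ + 1 ≠ 0 := by positivity
  have hne2 : (n:ℝ) + 1 ≠ 0 := by positivity
  field_simp
  ring

lemma aux_integrableOn (n : ℕ) (hn : 1 ≤ n) (a : ℝ) (ha : 0 ≤ a) (ha1 : a ≤ 1) :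
    IntegrableOn (fun lam : ℝ => max (a - lam ^ ((n : ℝ)⁻¹)) 0) (Ioi 0) volume := by
  have h1 : IntegrableOn (fun lam : ℝ => max (a - lam ^ ((n : ℝ)⁻¹)) 0) (Ioc 0 1) volume :=
    (aux_cont n a).integrableOn_Ioc
  have h2 : IntegrableOn (fun lam : ℝ => max (a - lam ^ ((n : ℝ)⁻¹)) 0) (Ioi 1) volume := by
    refine (integrableOn_congr_fun (g := fun _ => (0:ℝ)) ?_ measurableSet_Ioi).2
      integrableOn_zero
    intro x hx
    exact aux_zero n hn a ha (le_trans (pow_le_one₀ ha ha1) (le_of_lt hx))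
  have := h1.union h2
  rwa [Ioc_union_Ioi_eq_Ioi (by norm_num : (0:ℝ) ≤ 1)] at this

lemma pointwise (n : ℕ) (hn : 1 ≤ n) (b : ℝ) (hb : (3:ℝ)/4 ≤ b) {lam : ℝ} (hlam : 0 < lam) :
    destrMeas (Set.Ioc (0 : ℝ) b ∩ {x | x ^ n > lam})
      = max (b - lam ^ ((n : ℝ)⁻¹)) 0 - 2 * max (b - 3/4 - lam ^ ((n : ℝ)⁻¹)) 0 := by
  have hnR : (0:ℝ) < n := by exact_mod_cast hn
  set t : ℝ := lam ^ ((n : ℝ)⁻¹) with ht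
  have htpos : 0 < t := Real.rpow_pos_of_pos hlam _
  have hset : Set.Ioc (0 : ℝ) b ∩ {x | x ^ n > lam} = Ioc t b := by
    ext x
    simp only [mem_inter_iff, mem_Ioc, mem_setOf_eq, gt_iff_lt]
    constructor
    · rintro ⟨⟨hx0, hxb⟩, hxn⟩
      refine ⟨?_, hxb⟩
      have h1 : t < (x ^ n : ℝ) ^ ((n : ℝ)⁻¹) :=
        Real.rpow_lt_rpow hlam.le hxn (by positivity)
      have h2 : (x ^ n : ℝ) ^ ((n : ℝ)⁻¹) = x := by
        rw [← Real.rpow_natCast x n, ← Real.rpow_mul hx0.le,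
          mul_inv_cancel₀ hnR.ne', Real.rpow_one]
      linarith
    · rintro ⟨hx1, hx2⟩
      refine ⟨⟨htpos.trans hx1, hx2⟩, ?_⟩
      have h3 : t ^ n < x ^ n := pow_lt_pow_left₀ hx1 htpos.le
        (by exact_mod_cast Nat.one_le_iff_ne_zero.1 hn)
      have h4 : t ^ n = lam := by
        rw [ht, ← Real.rpow_natCast (lam ^ ((n:ℝ)⁻¹)) n, ← Real.rpow_mul hlam.le,
          inv_mul_cancel₀ hnR.ne', Real.rpow_one]
      linarith
  have hset2 : {x | x ∈ Ioc t b ∧ x + 3 / 4 ∈ Ioc t b} = Ioc t (b - 3/4) := by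
    ext x
    simp only [mem_setOf_eq, mem_Ioc]
    constructor
    · rintro ⟨⟨h1, h2⟩, h3, h4⟩
      exact ⟨h1, by linarith⟩
    · rintro ⟨h1, h2⟩
      exact ⟨⟨h1, by linarith⟩, by linarith, by linarith⟩
  rw [hset, destrMeas, hset2, Real.volume_Ioc, Real.volume_Ioc,
    ENNReal.toReal_ofReal', ENNReal.toReal_ofReal']


theorem stmt_18 (n : ℕ) (hn : 1 ≤ n) (b : ℝ) (hb : b ∈ Set.Icc (3 / 4 : ℝ) 1) :
    (∫ lam in Set.Ioi (0 : ℝ), destrMeas (Set.Ioc (0 : ℝ) b ∩ {x | x ^ n > lam})) =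
      (b ^ (n + 1) - 2 * (b - 3 / 4) ^ (n + 1)) / ((n : ℝ) + 1) := by
  obtain ⟨hb1, hb2⟩ := hb
  have hb0 : (0:ℝ) ≤ b := by linarith
  have hc0 : (0:ℝ) ≤ b - 3/4 := by linarith
  have hc1 : b - 3/4 ≤ 1 := by linarith
  rw [setIntegral_congr_fun measurableSet_Ioi
    (fun lam hlam => pointwise n hn b hb1 hlam)]
  rw [integral_sub (aux_integrableOn n hn b hb0 hb2)
    ((aux_integrableOn n hn (b - 3/4) hc0 hc1).const_mul 2),
    integral_const_mul, aux_integral n hn b hb0 hb2,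
    aux_integral n hn (b - 3/4) hc0 hc1]
  ring
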